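/- arXiv:1506.01913 — 4 statements merged into one kernel-verified Lean document; each statement's English description precedes it below -/
import Mathlib

section
/- Let U : ℝ^d → ℝ be continuously differentiable and let Δt > 0. If y₀, y₁ ∈ ℝ^d satisfy the average vector field (AVF) step y₁ = y₀ − Δt · ∫₀¹ ∇U(τ y₁ + (1−τ) y₀) dτ, then U(y₁) − U(y₀) = −(1/Δt) ‖y₁ − y₀‖²; in particular U(y₁) ≤ U(y₀). -/
/-- **AVF energy decrease (one step).** If `U : ℝ^d → ℝ` is continuously differentiable,
`Δt > 0`, and `y₁ = y₀ - Δt • ∫₀¹ ∇U(τ y₁ + (1-τ) y₀) dτ` (the average vector field step),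
then `U y₁ - U y₀ = -(1/Δt) ‖y₁ - y₀‖²`; in particular `U y₁ ≤ U y₀`. -/
theorem avf_one_step_energy_decrease
    {d : ℕ} (U : EuclideanSpace ℝ (Fin d) → ℝ) (hU : ContDiff ℝ 1 U)
    (Δt : ℝ) (hΔt : 0 < Δt)
    (y₀ y₁ : EuclideanSpace ℝ (Fin d))
    (hstep : y₁ = y₀ - Δt • ∫ τ in (0:ℝ)..1, gradient U (τ • y₁ + (1 - τ) • y₀)) :
    U y₁ - U y₀ = -(1 / Δt) * ‖y₁ - y₀‖ ^ 2 ∧ U y₁ ≤ U y₀ := by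
  set w : EuclideanSpace ℝ (Fin d) := y₁ - y₀ with hw
  set p : ℝ → EuclideanSpace ℝ (Fin d) := fun τ => τ • y₁ + (1 - τ) • y₀ with hp
  have hcont_p : Continuous p := by
    apply Continuous.add
    · exact (continuous_id.smul continuous_const)
    · exact ((continuous_const.sub continuous_id).smul continuous_const)
  have hcont_grad : Continuous fun x => gradient U x := by
    have h1 : Continuous (fderiv ℝ U) := hU.continuous_fderiv one_ne_zero
    exact ((InnerProductSpace.toDual ℝ _).symm.continuous.comp h1)
  have hderiv : ∀ τ : ℝ, HasDerivAt (fun t => U (p t))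
      (inner ℝ (gradient U (p τ)) w : ℝ) τ := by
    intro τ
    have hU' := (hU.differentiable one_ne_zero).differentiableAt.hasFDerivAt (x := p τ)
    have hp' : HasDerivAt p w τ := by
      have h1 : HasDerivAt (fun t : ℝ => t • y₁) y₁ τ := by
        simpa using (hasDerivAt_id τ).smul_const y₁
      have h2 : HasDerivAt (fun t : ℝ => (1 - t) • y₀) (-y₀) τ := by
        have : HasDerivAt (fun t : ℝ => (1 - t)) (-1) τ := by
          simpa using (hasDerivAt_id τ).const_sub (1:ℝ)
        simpa using this.smul_const y₀
      have h3 := h1.add h2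
      rw [← sub_eq_add_neg] at h3
      exact h3
    have := hU'.comp_hasDerivAt τ hp'
    convert this using 1
    case e'_9 => simp [gradient, InnerProductSpace.toDual_symm_apply]
    all_goals rfl
  have hint : IntervalIntegrable (fun τ => gradient U (p τ)) MeasureTheory.volume 0 1 :=
    (hcont_grad.comp hcont_p).intervalIntegrable 0 1
  have hint2 : IntervalIntegrable (fun τ => (inner ℝ (gradient U (p τ)) w : ℝ))
      MeasureTheory.volume 0 1 := by
    exact (Continuous.inner (hcont_grad.comp hcont_p) continuous_const).intervalIntegrable 0 1
  have hFTC : (∫ τ in (0:ℝ)..1, (inner ℝ (gradient U (p τ)) w : ℝ)) = U (p 1) - U (p 0) :=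
    intervalIntegral.integral_eq_sub_of_hasDerivAt (fun τ _ => hderiv τ) hint2
  have hpull : (∫ τ in (0:ℝ)..1, (inner ℝ (gradient U (p τ)) w : ℝ))
      = inner ℝ (∫ τ in (0:ℝ)..1, gradient U (p τ)) w := by
    have h := (innerSL ℝ w).intervalIntegral_comp_comm hint
    simp only [innerSL_apply_apply] at h
    rw [real_inner_comm, ← h]
    simp_rw [real_inner_comm]
  set I : EuclideanSpace ℝ (Fin d) := ∫ τ in (0:ℝ)..1, gradient U (p τ) with hI
  have hI' : I = -(1 / Δt) • w := by
    have h1 : w = -(Δt • I) := by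
      rw [hw, hstep]; simp [hI, hp]
    have : Δt • I = -w := by rw [h1]; simp
    have h2 : I = Δt⁻¹ • (-w) := by
      rw [← this, smul_smul, inv_mul_cancel₀ hΔt.ne', one_smul]
    rw [h2]; simp [one_div, neg_smul, smul_neg]
  have hp1 : p 1 = y₁ := by simp [hp]
  have hp0 : p 0 = y₀ := by simp [hp]
  have key : U y₁ - U y₀ = -(1 / Δt) * ‖w‖ ^ 2 := by
    rw [← hp1, ← hp0, ← hFTC, hpull, hI', real_inner_smul_left,
      real_inner_self_eq_norm_sq]
  refine ⟨key, ?_⟩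
  have h0 : 0 ≤ 1 / Δt := by positivity
  nlinarith [sq_nonneg ‖w‖, key]
end

section
/- Let U : ℝ^d → ℝ be continuously differentiable and let Δt > 0. If (y_n)_{n≥0} is a sequence in ℝ^d satisfying, for every n, the average vector field (AVF) step y_{n+1} = y_n − Δt · ∫₀¹ ∇U(τ y_{n+1} + (1−τ) y_n) dτ, then the sequence (U(y_n))_{n≥0} is monotonically nonincreasing, i.e. U(y_{n+1}) ≤ U(y_n) for all n, without any restriction on the step size Δt. -/
open scoped RealInnerProductSpace

/-- **AVF method is unconditionally energy stable.** If `U : ℝ^d → ℝ` is continuously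
differentiable, `Δt > 0`, and the sequence `y : ℕ → ℝ^d` satisfies the average vector field
step `y (n+1) = y n - Δt • ∫₀¹ ∇U(τ y(n+1) + (1-τ) y n) dτ` for every `n`, then the sequence
`n ↦ U (y n)` is monotonically nonincreasing, i.e. `U (y (n+1)) ≤ U (y n)` for all `n`,
without any restriction on the step size `Δt`. -/
theorem avf_energy_monotone
    {d : ℕ} (U : EuclideanSpace ℝ (Fin d) → ℝ) (hU : ContDiff ℝ 1 U)
    (Δt : ℝ) (hΔt : 0 < Δt)
    (y : ℕ → EuclideanSpace ℝ (Fin d))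
    (hstep : ∀ n : ℕ,
      y (n + 1) = y n - Δt • ∫ τ in (0:ℝ)..1, gradient U (τ • y (n + 1) + (1 - τ) • y n)) :
    Antitone (fun n : ℕ => U (y n)) ∧ ∀ n : ℕ, U (y (n + 1)) ≤ U (y n) := by
  have key : ∀ n : ℕ, U (y (n + 1)) ≤ U (y n) := by
    intro n
    set a := y (n + 1) with ha
    set b := y n with hb
    set v := a - b with hv
    set c : ℝ → EuclideanSpace ℝ (Fin d) := fun τ => τ • a + (1 - τ) • b with hc
    have hdiff : Differentiable ℝ U := hU.differentiable one_ne_zero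
    have hccont : Continuous c := by
      apply Continuous.add
      · exact (continuous_id.smul continuous_const)
      · exact ((continuous_const.sub continuous_id).smul continuous_const)
    have hgradcont : Continuous (gradient U) := by
      have h1 : Continuous (fderiv ℝ U) := hU.continuous_fderiv one_ne_zero
      exact (InnerProductSpace.toDual ℝ _).symm.continuous.comp h1
    have hGcont : Continuous (fun τ : ℝ => gradient U (c τ)) := hgradcont.comp hccont
    -- derivative of U along the segment
    have hderiv : ∀ τ ∈ Set.uIcc (0:ℝ) 1,
        HasDerivAt (fun τ => U (c τ)) ⟪gradient U (c τ), v⟫ τ := by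
      intro τ _
      have hcd : HasDerivAt c v τ := by
        have hfun : c = fun τ : ℝ => τ • v + b := by
          funext σ
          simp only [hc, hv, smul_sub, sub_smul, one_smul]
          abel
        rw [hfun]
        simpa using ((hasDerivAt_id τ).smul_const v).add_const b
      have hg : HasGradientAt U (gradient U (c τ)) (c τ) :=
        (hdiff (c τ)).hasGradientAt
      have hfd := hg.hasFDerivAt
      have := hfd.comp_hasDerivAt τ hcd
      simpa [InnerProductSpace.toDual_apply_apply, Function.comp_def] using this
    have hint : IntervalIntegrable (fun τ : ℝ => ⟪gradient U (c τ), v⟫) MeasureTheory.volume 0 1 :=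
      (hGcont.inner continuous_const).intervalIntegrable 0 1
    have hFTC : ∫ τ in (0:ℝ)..1, ⟪gradient U (c τ), v⟫ = U (c 1) - U (c 0) :=
      intervalIntegral.integral_eq_sub_of_hasDerivAt hderiv hint
    have hc1 : c 1 = a := by simp [hc]
    have hc0 : c 0 = b := by simp [hc]
    -- move inner product outside the integral
    set I := ∫ τ in (0:ℝ)..1, gradient U (c τ) with hI
    have hIint : IntervalIntegrable (fun τ : ℝ => gradient U (c τ)) MeasureTheory.volume 0 1 :=
      hGcont.intervalIntegrable 0 1
    have hswap : ∫ τ in (0:ℝ)..1, ⟪gradient U (c τ), v⟫ = ⟪I, v⟫ := by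
      have := (innerSL ℝ v).intervalIntegral_comp_comm hIint (a := 0) (b := 1)
      simp only [innerSL_apply_apply] at this
      calc ∫ τ in (0:ℝ)..1, ⟪gradient U (c τ), v⟫
          = ∫ τ in (0:ℝ)..1, ⟪v, gradient U (c τ)⟫ := by
            simp only [real_inner_comm]
        _ = ⟪v, I⟫ := this
        _ = ⟪I, v⟫ := real_inner_comm _ _
    -- use the AVF step
    have hvI : v = -(Δt • I) := by
      have hs := hstep n
      rw [← ha, ← hb] at hs
      rw [hv, hs]
      abel
    have hval : U a - U b = ⟪I, v⟫ := by
      rw [← hswap, hFTC, hc1, hc0]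
    have hIv : ⟪I, v⟫ = -(Δt⁻¹ * ‖v‖ ^ 2) := by
      have : Δt • I = -v := by rw [hvI]; simp
      have h2 : ⟪Δt • I, v⟫ = ⟪-v, v⟫ := by rw [this]
      rw [real_inner_smul_left, inner_neg_left, real_inner_self_eq_norm_sq] at h2
      field_simp at h2 ⊢
      linarith [h2]
    have : U a - U b ≤ 0 := by
      rw [hval, hIv]
      have : (0:ℝ) ≤ Δt⁻¹ * ‖v‖ ^ 2 := by positivity
      linarith
    linarith
  exact ⟨antitone_nat_of_succ_le key, key⟩
end

section
/- Let M, A_ε, A_μ ∈ ℝ^{N×N} with M symmetric, A_ε symmetric positive semidefinite, and A_μ positive semidefinite (vᵀ A_μ v ≥ 0 for all v). Let F : ℝ^N → ℝ be continuously differentiable with gradient b = ∇F, and define the discrete energy E(ξ) = ½ ξᵀ A_ε ξ + F(ξ). Let Δt > 0 and suppose ξ₀, ξ₁, ζ₀, ζ₁ ∈ ℝ^N satisfy the fully discrete AVF scheme: M(ξ₁ − ξ₀) + (Δt/2) A_μ (ζ₁ + ζ₀) = 0 and ½ M(ζ₁ + ζ₀) = ½ A_ε (ξ₁ + ξ₀)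 + ∫₀¹ b(τ ξ₁ + (1−τ) ξ₀) dτ. Then E(ξ₁) − E(ξ₀) = −(Δt/4) (ζ₁ + ζ₀)ᵀ A_μ (ζ₁ + ζ₀) ≤ 0; i.e. the fully discrete scheme is energy stable. -/
open scoped RealInnerProductSpace

/-- **Energy stability of the fully discrete AVF scheme.** Let `M` be symmetric, `A_ε`
symmetric positive semidefinite, `A_μ` positive semidefinite (`vᵀ A_μ v ≥ 0` for all `v`),
`F` continuously differentiable with gradient `b`, and `E(ξ) = ½ ξᵀ A_ε ξ + F(ξ)`. If
`Δt > 0` and `ξ₀, ξ₁, ζ₀, ζ₁` satisfy the fully discrete AVF scheme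
`M(ξ₁ - ξ₀) + (Δt/2) A_μ (ζ₁ + ζ₀) = 0` and
`½ M(ζ₁ + ζ₀) = ½ A_ε (ξ₁ + ξ₀) + ∫₀¹ b(τ ξ₁ + (1-τ) ξ₀) dτ`, then
`E(ξ₁) - E(ξ₀) = -(Δt/4) (ζ₁+ζ₀)ᵀ A_μ (ζ₁+ζ₀) ≤ 0`. -/
theorem fully_discrete_avf_energy_stable
    {N : ℕ} (M Aε Aμ : Matrix (Fin N) (Fin N) ℝ)
    (hM : M.IsSymm) (hAε : Aε.PosSemidef)
    (hAμ : ∀ v : EuclideanSpace ℝ (Fin N), 0 ≤ ⟪v, Matrix.toEuclideanLin Aμ v⟫)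
    (F : EuclideanSpace ℝ (Fin N) → ℝ) (hF : ContDiff ℝ 1 F)
    (b : EuclideanSpace ℝ (Fin N) → EuclideanSpace ℝ (Fin N))
    (hb : ∀ ξ, HasGradientAt F (b ξ) ξ)
    (E : EuclideanSpace ℝ (Fin N) → ℝ)
    (hE : ∀ ξ, E ξ = (1/2) * ⟪ξ, Matrix.toEuclideanLin Aε ξ⟫ + F ξ)
    (Δt : ℝ) (hΔt : 0 < Δt)
    (ξ₀ ξ₁ ζ₀ ζ₁ : EuclideanSpace ℝ (Fin N))
    (h1 : Matrix.toEuclideanLin M (ξ₁ - ξ₀)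
        + (Δt / 2) • Matrix.toEuclideanLin Aμ (ζ₁ + ζ₀) = 0)
    (h2 : (1/2 : ℝ) • Matrix.toEuclideanLin M (ζ₁ + ζ₀)
        = (1/2 : ℝ) • Matrix.toEuclideanLin Aε (ξ₁ + ξ₀)
          + ∫ τ in (0:ℝ)..1, b (τ • ξ₁ + (1 - τ) • ξ₀)) :
    E ξ₁ - E ξ₀ = -(Δt / 4) * ⟪ζ₁ + ζ₀, Matrix.toEuclideanLin Aμ (ζ₁ + ζ₀)⟫
      ∧ E ξ₁ ≤ E ξ₀ := by
  set AM := Matrix.toEuclideanLin M with hAM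
  set AE := Matrix.toEuclideanLin Aε with hAE
  set AU := Matrix.toEuclideanLin Aμ with hAU
  set δ : EuclideanSpace ℝ (Fin N) := ξ₁ - ξ₀ with hδ
  set s : EuclideanSpace ℝ (Fin N) := ζ₁ + ζ₀ with hs
  -- symmetry of the linear maps
  have hMsym : AM.IsSymmetric := by
    rw [hAM, ← Matrix.isHermitian_iff_isSymmetric]
    rwa [Matrix.IsHermitian, Matrix.conjTranspose_eq_transpose_of_trivial]
  have hEsym : AE.IsSymmetric := by
    rw [hAE, ← Matrix.isHermitian_iff_isSymmetric]
    exact hAε.1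
  -- continuity of b
  have hbc : Continuous b := by
    have h1 : ∀ x, b x = (InnerProductSpace.toDual ℝ _).symm (fderiv ℝ F x) := by
      intro x
      rw [(hb x).hasFDerivAt.fderiv]
      simp
    simp only [funext h1]
    exact (InnerProductSpace.toDual ℝ _).symm.continuous.comp
      (hF.continuous_fderiv one_ne_zero)
  -- the path
  set p : ℝ → EuclideanSpace ℝ (Fin N) := fun τ => τ • ξ₁ + (1 - τ) • ξ₀ with hp
  have hppath : ∀ τ : ℝ, p τ = ξ₀ + τ • δ := by
    intro τ; rw [hp, hδ]; simp
    module
  -- FTC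
  have hderiv : ∀ τ : ℝ, HasDerivAt (fun t => F (p t)) ⟪b (p τ), δ⟫ τ := by
    intro τ
    have hpd : HasDerivAt p δ τ := by
      simp only [funext hppath]
      simpa using ((hasDerivAt_id τ).smul_const δ).const_add ξ₀
    have := ((hb (p τ)).hasFDerivAt.comp_hasDerivAt τ hpd)
    simp at this
    exact this
  have hpc : Continuous p := by fun_prop
  have hint : IntervalIntegrable (fun τ => b (p τ)) MeasureTheory.volume 0 1 :=
    (hbc.comp hpc).intervalIntegrable 0 1
  have hFTC : F ξ₁ - F ξ₀ = ∫ τ in (0:ℝ)..1, ⟪b (p τ), δ⟫ := by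
    have := intervalIntegral.integral_eq_sub_of_hasDerivAt (fun τ _ => hderiv τ)
      (((hbc.comp hpc).inner continuous_const).intervalIntegrable 0 1)
    rw [this]; simp [hp]
  -- move inner out of the integral
  have hswap : (∫ τ in (0:ℝ)..1, ⟪b (p τ), δ⟫)
      = ⟪∫ τ in (0:ℝ)..1, b (p τ), δ⟫ := by
    have := (innerSL ℝ (E := EuclideanSpace ℝ (Fin N)) δ).intervalIntegral_comp_comm hint
    simp only [innerSL_apply_apply] at this
    rw [real_inner_comm, ← this]
    exact intervalIntegral.integral_congr fun τ _ => real_inner_comm _ _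
  -- quadratic identity
  have hquad : ⟪ξ₁, AE ξ₁⟫ - ⟪ξ₀, AE ξ₀⟫ = ⟪ξ₁ + ξ₀, AE δ⟫ := by
    have h01 : ⟪ξ₀, AE ξ₁⟫ = ⟪ξ₁, AE ξ₀⟫ := by
      rw [← hEsym ξ₀ ξ₁, real_inner_comm]
    rw [hδ]
    simp only [map_sub, map_add, inner_sub_right, inner_add_left, inner_add_right]
    linarith
  -- key chain
  have hMδ : AM δ = -((Δt / 2) • AU s) := by
    exact eq_neg_of_add_eq_zero_left h1
  have hEd : E ξ₁ - E ξ₀ = ⟪(1/2 : ℝ) • AM s, δ⟫ := by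
    rw [hE ξ₁, hE ξ₀, h2]
    rw [inner_add_left]
    have : ⟪(1/2 : ℝ) • AE (ξ₁ + ξ₀), δ⟫ = (1/2) * ⟪ξ₁ + ξ₀, AE δ⟫ := by
      rw [inner_smul_left, ← hEsym (ξ₁ + ξ₀) δ]
      simp
    rw [this, ← hswap, ← hFTC]
    have := hquad
    linarith
  have hfinal : E ξ₁ - E ξ₀ = -(Δt / 4) * ⟪s, AU s⟫ := by
    rw [hEd, inner_smul_left, hMsym s δ, hMδ, inner_neg_right, inner_smul_right]
    simp only [starRingEnd_apply, star_trivial]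
    ring
  refine ⟨hfinal, ?_⟩
  have := hAμ s
  nlinarith [hfinal, this, hΔt]
end

section
/- Let M, A_ε ∈ ℝ^{N×N} be symmetric with A_ε positive semidefinite, let A_μ : [0,T] → ℝ^{N×N} be such that A_μ(t) is positive semidefinite for each t, let F : ℝ^N → ℝ be continuously differentiable with gradient b = ∇F, and define E(ξ) = ½ ξᵀ A_ε ξ + F(ξ). Suppose ξ : [0,T] → ℝ^N is differentiable and ζ : [0,T] → ℝ^N satisfies, for all t ∈ [0,T], M ξ'(t) + A_μ(t) ζ(t) = 0 and M ζ(t) = A_ε ξ(t) + b(ξ(t)). Then for all t, the derivative of t ↦ E(ξ(t)) equals −ζ(t)ᵀ A_μ(t) ζ(t) ≤ 0, so the discrete energy t ↦ E(ξ(t)) is monotonically nonincreasing on [0,T]. -/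
open scoped RealInnerProductSpace

/-- **Energy dissipation of the semi-discrete Cahn–Hilliard system.** Let `M, A_ε` be
symmetric with `A_ε` positive semidefinite, `A_μ(t)` positive semidefinite for each `t`,
`F` continuously differentiable with gradient `b`, and `E(ξ) = ½ ξᵀ A_ε ξ + F(ξ)`. If
`ξ : [0,T] → ℝ^N` is differentiable and `M ξ'(t) + A_μ(t) ζ(t) = 0`,
`M ζ(t) = A_ε ξ(t) + b(ξ(t))` for all `t ∈ [0,T]`, then the derivative of `t ↦ E(ξ(t))`
equals `-ζ(t)ᵀ A_μ(t) ζ(t) ≤ 0`, so `t ↦ E(ξ(t))` is monotonically nonincreasing. -/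
theorem semidiscrete_energy_dissipation
    {N : ℕ} (M Aε : Matrix (Fin N) (Fin N) ℝ)
    (hM : M.IsSymm) (hAε : Aε.PosSemidef)
    (T : ℝ) (Aμ : ℝ → Matrix (Fin N) (Fin N) ℝ)
    (hAμ : ∀ (t : ℝ) (v : EuclideanSpace ℝ (Fin N)),
      0 ≤ ⟪v, Matrix.toEuclideanLin (Aμ t) v⟫)
    (F : EuclideanSpace ℝ (Fin N) → ℝ) (hF : ContDiff ℝ 1 F)
    (b : EuclideanSpace ℝ (Fin N) → EuclideanSpace ℝ (Fin N))
    (hb : ∀ ξ, HasGradientAt F (b ξ) ξ)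
    (E : EuclideanSpace ℝ (Fin N) → ℝ)
    (hE : ∀ ξ, E ξ = (1/2) * ⟪ξ, Matrix.toEuclideanLin Aε ξ⟫ + F ξ)
    (ξ ζ ξ' : ℝ → EuclideanSpace ℝ (Fin N))
    (hξ : ∀ t ∈ Set.Icc (0:ℝ) T, HasDerivAt ξ (ξ' t) t)
    (heq1 : ∀ t ∈ Set.Icc (0:ℝ) T,
      Matrix.toEuclideanLin M (ξ' t) + Matrix.toEuclideanLin (Aμ t) (ζ t) = 0)
    (heq2 : ∀ t ∈ Set.Icc (0:ℝ) T,
      Matrix.toEuclideanLin M (ζ t) = Matrix.toEuclideanLin Aε (ξ t) + b (ξ t)) :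
    (∀ t ∈ Set.Icc (0:ℝ) T,
        HasDerivAt (fun s => E (ξ s)) (-⟪ζ t, Matrix.toEuclideanLin (Aμ t) (ζ t)⟫) t ∧
          -⟪ζ t, Matrix.toEuclideanLin (Aμ t) (ζ t)⟫ ≤ 0) ∧
      AntitoneOn (fun t => E (ξ t)) (Set.Icc (0:ℝ) T) := by
  classical
  -- self-adjointness of the operators
  have hMsym : (Matrix.toEuclideanLin M).IsSymmetric := by
    rw [← Matrix.isHermitian_iff_isSymmetric, Matrix.IsHermitian,
      Matrix.conjTranspose_eq_transpose_of_trivial]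
    exact hM
  have hAsym : (Matrix.toEuclideanLin Aε).IsSymmetric :=
    Matrix.isHermitian_iff_isSymmetric.mp hAε.1
  set Lc : EuclideanSpace ℝ (Fin N) →L[ℝ] EuclideanSpace ℝ (Fin N) :=
    LinearMap.toContinuousLinearMap (Matrix.toEuclideanLin Aε) with hLc
  have hLcval : ∀ v, Lc v = Matrix.toEuclideanLin Aε v := fun v => rfl
  have key : ∀ t ∈ Set.Icc (0:ℝ) T,
      HasDerivAt (fun s => E (ξ s)) (-⟪ζ t, Matrix.toEuclideanLin (Aμ t) (ζ t)⟫) t := by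
    intro t ht
    have hξt := hξ t ht
    have hL : HasDerivAt (fun s => Lc (ξ s)) (Lc (ξ' t)) t :=
      Lc.hasFDerivAt.comp_hasDerivAt t hξt
    have hquad : HasDerivAt (fun s => ⟪ξ s, Lc (ξ s)⟫)
        (⟪ξ t, Lc (ξ' t)⟫ + ⟪ξ' t, Lc (ξ t)⟫) t := hξt.inner ℝ hL
    have hFcomp : HasDerivAt (fun s => F (ξ s))
        ((InnerProductSpace.toDual ℝ (EuclideanSpace ℝ (Fin N)) (b (ξ t))) (ξ' t)) t :=
      (hb (ξ t)).hasFDerivAt.comp_hasDerivAt t hξt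
    rw [InnerProductSpace.toDual_apply_apply] at hFcomp
    have hsum : HasDerivAt (fun s => (1/2) * ⟪ξ s, Lc (ξ s)⟫ + F (ξ s))
        ((1/2) * (⟪ξ t, Lc (ξ' t)⟫ + ⟪ξ' t, Lc (ξ t)⟫) + ⟪b (ξ t), ξ' t⟫) t :=
      (hquad.const_mul (1/2)).add hFcomp
    have hfeq : (fun s => (1/2) * ⟪ξ s, Lc (ξ s)⟫ + F (ξ s)) = fun s => E (ξ s) := by
      funext s; rw [hE (ξ s), hLcval]
    rw [hfeq] at hsum
    have hval : (1/2) * (⟪ξ t, Lc (ξ' t)⟫ + ⟪ξ' t, Lc (ξ t)⟫) + ⟪b (ξ t), ξ' t⟫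
        = -⟪ζ t, Matrix.toEuclideanLin (Aμ t) (ζ t)⟫ := by
      have h1 : ⟪ξ t, Lc (ξ' t)⟫ = ⟪Lc (ξ t), ξ' t⟫ := by
        rw [hLcval, hLcval, ← hAsym]
      have h2 : ⟪ξ' t, Lc (ξ t)⟫ = ⟪Lc (ξ t), ξ' t⟫ := real_inner_comm _ _
      rw [h1, h2]
      have hMξ' : Matrix.toEuclideanLin M (ξ' t)
          = -(Matrix.toEuclideanLin (Aμ t) (ζ t)) := by
        have := heq1 t ht; linear_combination (norm := module) this
      calc (1/2) * (⟪Lc (ξ t), ξ' t⟫ + ⟪Lc (ξ t), ξ' t⟫) + ⟪b (ξ t), ξ' t⟫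
          = ⟪Matrix.toEuclideanLin Aε (ξ t) + b (ξ t), ξ' t⟫ := by
            rw [inner_add_left, hLcval]; ring
        _ = ⟪Matrix.toEuclideanLin M (ζ t), ξ' t⟫ := by rw [heq2 t ht]
        _ = ⟪ζ t, Matrix.toEuclideanLin M (ξ' t)⟫ := hMsym _ _
        _ = -⟪ζ t, Matrix.toEuclideanLin (Aμ t) (ζ t)⟫ := by
            rw [hMξ', inner_neg_right]
    rwa [hval] at hsum
  refine ⟨fun t ht => ⟨key t ht, neg_nonpos.mpr (hAμ t (ζ t))⟩, ?_⟩
  apply antitoneOn_of_deriv_nonpos (convex_Icc 0 T)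
  · exact fun t ht => (key t ht).continuousAt.continuousWithinAt
  · intro t ht
    exact ((key t (interior_subset ht)).differentiableAt).differentiableWithinAt
  · intro t ht
    rw [(key t (interior_subset ht)).deriv]
    exact neg_nonpos.mpr (hAμ t (ζ t))
end
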